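/- Let A be a k-ary algebra (k-linear operation, not necessarily symmetric) over a field of characteristic zero satisfying w_d^{(k)} = 0 identically. Then the totally symmetrized operation [a_1...a_k] = Σ_{σ∈S_k} (a_{σ(1)}...a_{σ(k)}) satisfies the identity t_d^{(k)} = 0, where t_d^{(k)} is the sum of all distinct multilinear degree-d monomials built from the symmetric operation. -/

import Mathlib

/-- `wk k f fuel l`: fuel-based recursion realizing
`w₁⁽ᵏ⁾(a) = a` and `wₙ⁽ᵏ⁾ = Σ_{n=i₁+⋯+i_k, iⱼ ≥ 1} f(w_{i₁}⁽ᵏ⁾(…),…,w_{i_k}⁽ᵏ⁾(…))`,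
the sum of all distinct multilinear monomials built from the `k`-ary operation `f`
with arguments in the natural order. -/
def wk {A : Type*} [AddCommGroup A] [Module ℚ A] (k : ℕ)
    (f : MultilinearMap ℚ (fun _ : Fin k => A) A) : ℕ → List A → A
  | 0, _ => 0
  | _ + 1, [a] => a
  | fuel + 1, l =>
      ∑ c ∈ (Finset.Nat.antidiagonalTuple k l.length).filter (fun c => ∀ i, 1 ≤ c i),
        f (fun i => wk k f fuel
          ((l.drop (∑ j ∈ Finset.univ.filter (fun j => j < i), c j)).take (c i)))

/-- `Wk k f [a₁,…,aₙ] = wₙ⁽ᵏ⁾(a₁,…,aₙ)`. -/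
def Wk {A : Type*} [AddCommGroup A] [Module ℚ A] (k : ℕ)
    (f : MultilinearMap ℚ (fun _ : Fin k => A) A) (l : List A) : A :=
  wk k f l.length l

/-- `tk k f fuel l`: fuel-based recursion computing `tₙ⁽ᵏ⁾(a₁,…,aₙ)`, the sum of all
distinct multilinear degree-`n` monomials built from a totally symmetric `k`-ary
operation `f`: the sum is over all partitions of the index set into `k` nonempty
blocks, encoded by the surjective block-assignment functions `p` normalized so that
blocks are listed in order of first occurrence. -/
noncomputable def tk {A : Type*} [AddCommGroup A] [Module ℚ A] (k : ℕ)
    (f : MultilinearMap ℚ (fun _ : Fin k => A) A) : ℕ → List A → A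
  | 0, _ => 0
  | _ + 1, [a] => a
  | fuel + 1, l =>
      letI : DecidablePred (fun p : Fin l.length → Fin k =>
          Function.Surjective p ∧ ∀ i b', b' < p i → ∃ j, j < i ∧ p j = b') :=
        fun _ => Classical.dec _
      ∑ p ∈ Finset.univ.filter (fun p : Fin l.length → Fin k =>
          Function.Surjective p ∧ ∀ i b', b' < p i → ∃ j, j < i ∧ p j = b'),
        f (fun b => tk k f fuel
          (((List.finRange l.length).filter (fun i => p i = b)).map l.get))

/-- `Tk k f [a₁,…,aₙ] = tₙ⁽ᵏ⁾(a₁,…,aₙ)`. -/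
noncomputable def Tk {A : Type*} [AddCommGroup A] [Module ℚ A] (k : ℕ)
    (f : MultilinearMap ℚ (fun _ : Fin k => A) A) (l : List A) : A :=
  tk k f l.length l


/-!
Write `S_n(a₁, …, a_m) = Σ_{σ ∈ S_m} w_n(a_{σ 1}, …, a_{σ m})` (this is `symmWk f n a`).
Expanding the root of each `w`, an ordering `σ` together with a composition `(c₁, …, c_k)`
of `m` is the same thing as a map `q` sending every argument to one of `k` blocks together
with an ordering of every block, so `S(a) = Σ_{q surjective} f(S(block₁ q), …, S(block_k q))`. The `k!`
relabellings of the blocks of a set partition are exactly the `k!` terms of the symmetrized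
operation, hence `t` of the symmetrized operation obeys the same recursion over set partitions
(listed in restricted growth form), and `t_d = S_d` vanishes together with `w_d`.
-/

open Finset Function

section EquivSigma

variable {ι X : Type*} {β : ι → Type*} [Fintype ι] [DecidableEq ι] [∀ i, Fintype (β i)]
  [∀ i, DecidableEq (β i)] [Fintype X] [DecidableEq X]

theorem Fintype.sum_sigmaEquiv_eq_sum_fibers {M : Type*} [AddCommMonoid M]
    (G : ((Σ i, β i) ≃ X) → M) :
    ∑ E, G E = ∑ q : X → ι, ∑ h : (∀ i, β i ≃ {x // q x = i}),
      G ((Equiv.sigmaCongrRight h).trans (Equiv.sigmaFiberEquiv q)) := by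
  let Φ (qh : Σ q : X → ι, ∀ i, β i ≃ {x // q x = i}) : (Σ i, β i) ≃ X :=
    (Equiv.sigmaCongrRight qh.2).trans (Equiv.sigmaFiberEquiv qh.1)
  have hΦ : Bijective Φ := by
    refine ⟨fun ⟨q, h⟩ ⟨q', h'⟩ hE => ?_, fun E => ?_⟩
    · obtain rfl : q = q' := funext fun x => congrArg (fun E => (Equiv.symm E x).1) hE
      obtain rfl : h = h' := funext fun i => Equiv.ext fun y =>
        Subtype.ext (congrArg (fun E : (Σ i, β i) ≃ X => E ⟨i, y⟩) hE)
      rfl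
    · refine ⟨⟨fun x => (E.symm x).1, fun i =>
        (Equiv.sigmaSubtype i).symm.trans (E.subtypeEquiv fun s => by simp)⟩, ?_⟩
      ext ⟨i, y⟩
      rfl
  exact (Fintype.sum_bijective Φ hΦ _ G fun _ => rfl).symm.trans (Fintype.sum_sigma (G ∘ Φ))

end EquivSigma

theorem Fin.sum_filter_lt_eq_sum_castLE {M : Type*} [AddCommMonoid M] {k : ℕ} (c : Fin k → M)
    (b : Fin k) :
    ∑ j ∈ univ.filter (· < b), c j = ∑ i : Fin b, c (Fin.castLE b.2.le i) := by
  change _ = ∑ i, c (Fin.castLEEmb b.2.le i)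
  rw [← Finset.sum_map _ (Fin.castLEEmb b.2.le)]
  congr 1
  ext j
  simp only [mem_filter, mem_univ, true_and, mem_map, Fin.castLEEmb_apply]
  exact ⟨fun h => ⟨⟨j, h⟩, rfl⟩, by rintro ⟨i, rfl⟩; exact i.2⟩

theorem take_drop_ofFn_eq_ofFn_finSigmaFinEquiv {α : Type*} {k m : ℕ} (c : Fin k → ℕ)
    (hc : ∑ j, c j = m) (w : Fin m → α) (b : Fin k) :
    ((List.ofFn w).drop (∑ j ∈ univ.filter (· < b), c j)).take (c b)
      = List.ofFn fun t : Fin (c b) => w (Fin.cast hc (finSigmaFinEquiv ⟨b, t⟩)) := by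
  have hoff := Fin.sum_filter_lt_eq_sum_castLE c b
  have hlt (t : Fin (c b)) : ∑ j ∈ univ.filter (· < b), c j + t < m := by
    simpa [hoff] using (Fin.cast hc (finSigmaFinEquiv ⟨b, t⟩)).2
  apply List.ext_getElem
  · simp only [List.length_take, List.length_drop, List.length_ofFn]
    rcases Nat.eq_zero_or_pos (c b) with h | h
    · simp [h]
    · have := hlt ⟨c b - 1, by omega⟩
      simp only at this
      omega
  · intro t h1 h2
    simp only [List.getElem_take, List.getElem_drop, List.getElem_ofFn]
    congr 1
    ext
    simp [hoff]

namespace RestrictedGrowth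

variable {m k : ℕ}

abbrev IsRestrictedGrowth (p : Fin m → Fin k) : Prop :=
  ∀ i b, b < p i → ∃ j, j < i ∧ p j = b

def firstIndex (q : Fin m → Fin k) (hq : Surjective q) (b : Fin k) : Fin m :=
  (univ.filter (q · = b)).min' (let ⟨i, hi⟩ := hq b; ⟨i, by simpa using hi⟩)

variable {q : Fin m → Fin k}

theorem apply_firstIndex (hq : Surjective q) (b : Fin k) : q (firstIndex q hq b) = b :=
  (mem_filter.1 (min'_mem (univ.filter (q · = b)) _)).2

theorem firstIndex_le (hq : Surjective q) {i : Fin m} {b : Fin k} (h : q i = b) :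
    firstIndex q hq b ≤ i :=
  min'_le _ _ (by simpa using h)

theorem isRestrictedGrowth_iff_strictMono (hq : Surjective q) :
    IsRestrictedGrowth q ↔ StrictMono (firstIndex q hq) := by
  constructor
  · intro h b b' hbb'
    obtain ⟨j, hj, hqj⟩ := h _ b (by rwa [apply_firstIndex hq])
    exact (firstIndex_le hq hqj).trans_lt hj
  · intro h i b hb
    exact ⟨firstIndex q hq b, (h hb).trans_le (firstIndex_le hq rfl), apply_firstIndex hq b⟩

theorem firstIndex_perm_comp (hq : Surjective q) (ρ : Equiv.Perm (Fin k)) :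
    firstIndex (ρ ∘ q) (ρ.surjective.comp hq) = firstIndex q hq ∘ ρ.symm := by
  ext1 b
  simp only [firstIndex, comp_apply, ← Equiv.eq_symm_apply]

theorem exists_perm_comp_isRestrictedGrowth (hq : Surjective q) :
    ∃ ρ : Equiv.Perm (Fin k), IsRestrictedGrowth (ρ ∘ q) := by
  set σ := Tuple.sort (firstIndex q hq)
  refine ⟨σ.symm, (isRestrictedGrowth_iff_strictMono (σ.symm.surjective.comp hq)).2 ?_⟩
  rw [firstIndex_perm_comp hq, Equiv.symm_symm]
  refine (Tuple.monotone_sort _).strictMono_of_injective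
    (HasLeftInverse.injective ⟨σ.symm ∘ q, fun b => ?_⟩)
  simp [σ, apply_firstIndex hq]

theorem eq_one_of_isRestrictedGrowth (hq : Surjective q) {p : Fin m → Fin k}
    (hp : IsRestrictedGrowth p) (hq' : IsRestrictedGrowth q) {ρ : Equiv.Perm (Fin k)}
    (h : p = ρ ∘ q) : ρ = 1 := by
  subst h
  rw [isRestrictedGrowth_iff_strictMono (ρ.surjective.comp hq), firstIndex_perm_comp hq] at hp
  rw [isRestrictedGrowth_iff_strictMono hq] at hq'
  have : StrictMono ρ.symm := fun a b hab => hq'.lt_iff_lt.1 (hp hab)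
  ext1 b
  simpa using congrArg ρ (this.apply_eq (x := b)).symm

theorem sum_isRestrictedGrowth_sum_perm_comp {M : Type*} [AddCommMonoid M]
    (X : (Fin m → Fin k) → M) :
    ∑ p ∈ univ.filter (fun p => Surjective p ∧ IsRestrictedGrowth p),
        ∑ τ : Equiv.Perm (Fin k), X (τ ∘ p)
      = ∑ q ∈ univ.filter Surjective, X q := by
  rw [sum_sigma']
  refine sum_bij (fun x _ => x.2 ∘ x.1) ?_ ?_ ?_ fun _ _ => rfl
  · rintro ⟨p, τ⟩ h
    simp only [mem_sigma, mem_filter, mem_univ, true_and] at h ⊢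
    exact τ.surjective.comp h.1.1
  · rintro ⟨p, τ⟩ h ⟨p', τ'⟩ h' hpp'
    simp only [mem_sigma, mem_filter, mem_univ, true_and, and_true] at h h' hpp'
    have hρ := eq_one_of_isRestrictedGrowth h'.1 h.2 h'.2 (ρ := τ⁻¹ * τ') <| by
      ext1 i; simpa [eq_comm, Equiv.Perm.inv_def, Equiv.eq_symm_apply] using congrFun hpp' i
    obtain rfl : τ = τ' := inv_mul_eq_one.1 hρ
    obtain rfl : p = p' := funext fun i => τ.injective (congrFun hpp' i)
    rfl
  · intro q hq
    simp only [mem_filter, mem_univ, true_and] at hq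
    obtain ⟨ρ, hρ⟩ := exists_perm_comp_isRestrictedGrowth hq
    exact ⟨⟨ρ ∘ q, ρ⁻¹⟩, by simpa using ⟨hq, hρ⟩, by ext1; simp⟩

end RestrictedGrowth

section Fibers

variable {m k : ℕ}

def fiberList (q : Fin m → Fin k) (b : Fin k) : List (Fin m) :=
  (List.finRange m).filter (fun i => q i = b)

def fiberEquiv (q : Fin m → Fin k) (b : Fin k) : Fin (fiberList q b).length ≃ {i // q i = b} :=
  ((List.nodup_finRange m).filter _).getEquiv.trans
    (Equiv.subtypeEquivRight fun i => by simp)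

theorem fiberList_perm_comp (q : Fin m → Fin k) (ρ : Equiv.Perm (Fin k)) (b : Fin k) :
    fiberList (ρ ∘ q) b = fiberList q (ρ.symm b) := by
  simp only [fiberList, comp_apply, ← Equiv.eq_symm_apply]

theorem card_fiber (q : Fin m → Fin k) (b : Fin k) :
    Fintype.card {i // q i = b} = (fiberList q b).length := by
  simpa using (Fintype.card_congr (fiberEquiv q b)).symm

theorem sum_length_fiberList (q : Fin m → Fin k) : ∑ b, (fiberList q b).length = m := by
  simpa [card_fiber] using Fintype.card_congr (Equiv.sigmaFiberEquiv q)

theorem surjective_iff_one_le_length_fiberList {q : Fin m → Fin k} :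
    Surjective q ↔ ∀ b, 1 ≤ (fiberList q b).length := by
  refine forall_congr' fun b => ?_
  rw [← card_fiber, Order.one_le_iff_pos, Fintype.card_pos_iff, nonempty_subtype]

end Fibers

theorem MultilinearMap.sum_filter_antidiagonalTuple_eq_ite {R M N : Type*} [Semiring R]
    [AddCommMonoid M] [Module R M] [AddCommMonoid N] [Module R N] {k : ℕ}
    (f : MultilinearMap R (fun _ : Fin k => M) N) (g : Fin k → ℕ → M) (s : Fin k → ℕ)
    (hg : ∀ b c, c ≠ s b → g b c = 0) (n : ℕ) :
    ∑ c ∈ (Nat.antidiagonalTuple k n).filter (fun c => ∀ i, 1 ≤ c i), f (fun b => g b (c b))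
      = if s ∈ (Nat.antidiagonalTuple k n).filter (fun c => ∀ i, 1 ≤ c i)
        then f (fun b => g b (s b)) else 0 := by
  have hzero : ∀ c, c ≠ s → f (fun b => g b (c b)) = 0 := fun c hc =>
    let ⟨b, hb⟩ := Function.ne_iff.1 hc
    f.map_coord_zero b (hg b _ hb)
  split_ifs with hs
  · exact sum_eq_single_of_mem s hs fun c _ hc => hzero c hc
  · exact sum_eq_zero fun c hc => hzero c (ne_of_mem_of_not_mem hc hs)

section Symmetrization

variable {A : Type*} [AddCommGroup A] [Module ℚ A] {k : ℕ}
  (f : MultilinearMap ℚ (fun _ : Fin k => A) A)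

def symmWk (n : ℕ) {m : ℕ} (v : Fin m → A) : A :=
  ∑ σ : Equiv.Perm (Fin m), wk k f n (List.ofFn (v ∘ σ))

theorem symmWk_congr (n : ℕ) {m m' : ℕ} {v : Fin m → A} {v' : Fin m' → A}
    (h : List.ofFn v = List.ofFn v') : symmWk f n v = symmWk f n v' := by
  obtain ⟨rfl, rfl⟩ := Sigma.mk.inj_iff.1 (List.ofFn_inj'.1 h)
  rfl

theorem wk_succ (n : ℕ) {l : List A} (hl : l.length ≠ 1) :
    wk k f (n + 1) l
      = ∑ c ∈ (Nat.antidiagonalTuple k l.length).filter (fun c => ∀ i, 1 ≤ c i),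
          f (fun i => wk k f n ((l.drop (∑ j ∈ univ.filter (· < i), c j)).take (c i))) := by
  rw [wk]
  rintro a rfl
  exact hl rfl

theorem sum_equiv_fiber_eq_symmWk (n : ℕ) {m : ℕ} (v : Fin m → A) (q : Fin m → Fin k)
    (b : Fin k) :
    ∑ h : Fin (fiberList q b).length ≃ {i // q i = b}, wk k f n (List.ofFn fun t => v (h t))
      = symmWk f n (v ∘ (fiberList q b).get) :=
  (Fintype.sum_equiv ((Equiv.refl _).equivCongr (fiberEquiv q b)) _ _ fun _ => rfl).symm

theorem symmWk_succ (n : ℕ) {m : ℕ} (hm : m ≠ 1) (v : Fin m → A) :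
    symmWk f (n + 1) v
      = ∑ q ∈ univ.filter Surjective, f (fun b => symmWk f n (v ∘ (fiberList q b).get)) := by
  set P := (Nat.antidiagonalTuple k m).filter (fun c => ∀ i, 1 ≤ c i)
  calc symmWk f (n + 1) v
      = ∑ σ : Equiv.Perm (Fin m), ∑ c ∈ P, f (fun b => wk k f n
          (((List.ofFn (v ∘ σ)).drop (∑ j ∈ univ.filter (· < b), c j)).take (c b))) := by
        refine sum_congr rfl fun σ _ => ?_
        rw [wk_succ f n (by rwa [List.length_ofFn]), List.length_ofFn]
    _ = ∑ c ∈ P, ∑ E : (Σ b, Fin (c b)) ≃ Fin m,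
          f (fun b => wk k f n (List.ofFn fun t => v (E ⟨b, t⟩))) := by
        rw [sum_comm]
        refine sum_congr rfl fun c hc => ?_
        have hcm : ∑ j, c j = m := Nat.mem_antidiagonalTuple.1 (mem_filter.1 hc).1
        refine Fintype.sum_equiv
          ((finSigmaFinEquiv.trans (finCongr hcm)).symm.equivCongr (Equiv.refl _)) _ _
          fun σ => ?_
        simp [take_drop_ofFn_eq_ofFn_finSigmaFinEquiv c hcm]
    _ = ∑ c ∈ P, ∑ q : Fin m → Fin k,
          f (fun b => ∑ h : Fin (c b) ≃ {i // q i = b},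
            wk k f n (List.ofFn fun t => v (h t))) := by
        refine sum_congr rfl fun c _ => ?_
        simp only [Fintype.sum_sigmaEquiv_eq_sum_fibers, MultilinearMap.map_sum]
        rfl
    _ = ∑ q : Fin m → Fin k, if Surjective q then f (fun b =>
          ∑ h : Fin (fiberList q b).length ≃ {i // q i = b},
            wk k f n (List.ofFn fun t => v (h t))) else 0 := by
        rw [sum_comm]
        refine sum_congr rfl fun q _ => ?_
        refine (f.sum_filter_antidiagonalTuple_eq_ite (fun b c => ∑ h : Fin c ≃ {i // q i = b},
          wk k f n (List.ofFn fun t => v (h t))) (fun b => (fiberList q b).length) ?_ m).trans ?_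
        · intro b c hc
          refine sum_eq_zero fun h _ => absurd ?_ hc
          simpa [card_fiber] using Fintype.card_congr h
        · simp [Nat.mem_antidiagonalTuple, sum_length_fiberList,
            surjective_iff_one_le_length_fiberList]
    _ = _ := by
        simp only [← sum_filter, sum_equiv_fiber_eq_symmWk]

open RestrictedGrowth in
theorem tk_succ (F : MultilinearMap ℚ (fun _ : Fin k => A) A) (n : ℕ) {l : List A}
    (hl : l.length ≠ 1) :
    tk k F (n + 1) l = ∑ p ∈ univ.filter (fun p => Surjective p ∧ IsRestrictedGrowth p),
      F (fun b => tk k F n ((fiberList p b).map l.get)) := by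
  rw [tk]
  · exact sum_congr (filter_congr_decidable _ _ _) fun _ _ => rfl
  · rintro a rfl
    exact hl rfl

theorem tk_sum_domDomCongr_succ (n : ℕ) {l : List A} (hl : l.length ≠ 1) :
    tk k (∑ σ : Equiv.Perm (Fin k), f.domDomCongr σ) (n + 1) l
      = ∑ q ∈ univ.filter Surjective, f (fun b =>
          tk k (∑ σ : Equiv.Perm (Fin k), f.domDomCongr σ) n ((fiberList q b).map l.get)) := by
  set F := ∑ σ : Equiv.Perm (Fin k), f.domDomCongr σ
  rw [tk_succ F n hl, ← RestrictedGrowth.sum_isRestrictedGrowth_sum_perm_comp fun q =>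
    f fun b => tk k F n ((fiberList q b).map l.get)]
  refine sum_congr rfl fun p _ => ?_
  rw [_root_.sum_apply]
  refine Fintype.sum_equiv (Equiv.inv _) _ _ fun τ => ?_
  simp [fiberList_perm_comp, Equiv.Perm.inv_def]

theorem tk_sum_domDomCongr_eq_symmWk (n : ℕ) (l : List A) :
    tk k (∑ σ : Equiv.Perm (Fin k), f.domDomCongr σ) n l = symmWk f n l.get := by
  induction n generalizing l with
  | zero => simp [symmWk, wk, tk]
  | succ n ih =>
    by_cases hl : l.length = 1
    · obtain ⟨a, rfl⟩ := List.length_eq_one_iff.1 hl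
      simp [symmWk, tk, wk]
    rw [tk_sum_domDomCongr_succ f n hl, symmWk_succ f n hl]
    refine sum_congr rfl fun q _ => congrArg f (funext fun b => ?_)
    rw [ih]
    exact symmWk_congr f n (by rw [List.ofFn_get, ← List.map_ofFn, List.ofFn_get])

end Symmetrization

theorem symmetrized_tdk_of_wdk_general {A : Type*} [AddCommGroup A] [Module ℚ A]
    (k : ℕ) (f : MultilinearMap ℚ (fun _ : Fin k => A) A) (d : ℕ)
    (h : ∀ l : List A, l.length = d → Wk k f l = 0) :
    ∀ l : List A, l.length = d →
      Tk k (∑ σ : Equiv.Perm (Fin k), f.domDomCongr σ) l = 0 := by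
  intro l hl
  rw [Tk, tk_sum_domDomCongr_eq_symmWk]
  refine sum_eq_zero fun σ _ => ?_
  simpa [Wk] using h (List.ofFn (l.get ∘ σ)) (by simpa using hl)

/-- If a `k`-ary algebra over `ℚ` satisfies the identity `w_d⁽ᵏ⁾ = 0`, then the
totally symmetrized operation `[a₁…a_k] = Σ_{σ∈S_k} (a_{σ(1)}…a_{σ(k)})` satisfies
the identity `t_d⁽ᵏ⁾ = 0`. -/
theorem symmetrized_tdk_of_wdk {A : Type*} [AddCommGroup A] [Module ℚ A]
    (k : ℕ) (hk : 2 ≤ k) (f : MultilinearMap ℚ (fun _ : Fin k => A) A) (d : ℕ)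
    (h : ∀ l : List A, l.length = d → Wk k f l = 0) :
    ∀ l : List A, l.length = d →
      Tk k (∑ σ : Equiv.Perm (Fin k), f.domDomCongr σ) l = 0 :=
  symmetrized_tdk_of_wdk_general k f d h
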